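/- Let g(τ) = 1 on [0,1/4], 0 on (1/4,3/4), −1 on [3/4,1], and let h : [0,1] → ℝ satisfy h(τ+1/2) = −h(τ) for a.e. τ ∈ (0,1/2). If additionally h satisfies the reflection symmetry h(τ) = h(1/2−τ) for a.e. τ ∈ (0,1/2) (the even-index PWM symmetry), then ‖g − h‖²_{L²([0,1])} ≥ 1/4 · ‖g‖²_{L²([0,1])} > 0; hence no sequence of such functions converges to g in L²([0,1]). -/

import Mathlib

open MeasureTheory

noncomputable def g3 (τ : ℝ) : ℝ :=
  if τ ≤ 1/4 then 1 else if τ < 3/4 then 0 else -1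

/-!
On `[0, 1/4]` we have `g3 = 1` and on `(1/4, 1/2]` we have `g3 = 0`; the reflection
`τ ↦ 1/2 - τ` swaps these two intervals and preserves `h`. Hence
`∫₀^{1/2} (g3 - h)² = ∫₀^{1/4} ((1 - h)² + h²) ≥ 1/8`, because `(1 - x)² + x² ≥ 1/2`,
while `∫₀¹ g3² = 1/2`.
-/

open Set

theorem IntervalIntegrable.sub_sq_of_bounded {f h : ℝ → ℝ} {a b C : ℝ}
    (hf : AEStronglyMeasurable f) (hfC : ∀ x, ‖f x‖ ≤ C) (hh : AEStronglyMeasurable h)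
    (hh2 : IntervalIntegrable (fun x => h x ^ 2) volume a b) :
    IntervalIntegrable (fun x => (f x - h x) ^ 2) volume a b := by
  rw [intervalIntegrable_iff] at hh2 ⊢
  have : IsFiniteMeasure (volume.restrict (uIoc a b)) :=
    isFiniteMeasure_restrict.2 measure_Ioc_lt_top.ne
  have hfL : MemLp f 2 (volume.restrict (uIoc a b)) :=
    .of_bound hf.restrict C (.of_forall hfC)
  have hhL : MemLp h 2 (volume.restrict (uIoc a b)) :=
    (memLp_two_iff_integrable_sq hh.restrict).2 hh2
  exact (hfL.sub hhL).integrable_sq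

theorem intervalIntegral.integral_upper_half_eq_of_ae_symm {f : ℝ → ℝ} {c : ℝ} (hc : 0 ≤ c)
    (hf : ∀ᵐ τ, τ ∈ Ioo 0 c → f τ = f (c - τ)) :
    ∫ τ in (c / 2)..c, f τ = ∫ τ in 0..(c / 2), f τ := by
  calc ∫ τ in (c / 2)..c, f τ = ∫ τ in 0..(c / 2), f (c - τ) := by
        rw [intervalIntegral.integral_comp_sub_left f c]; ring_nf
    _ = ∫ τ in 0..(c / 2), f τ := by
        refine intervalIntegral.integral_congr_ae ?_
        filter_upwards [hf] with τ hτ hmem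
        rw [uIoc_of_le (by linarith)] at hmem
        exact (hτ ⟨hmem.1, by linarith [hmem.1, hmem.2]⟩).symm

theorem half_le_one_sub_sq_add_sq (x : ℝ) : 1 / 2 ≤ (1 - x) ^ 2 + x ^ 2 := by
  nlinarith [sq_nonneg (2 * x - 1)]

theorem measurable_g3 : Measurable g3 :=
  Measurable.ite (measurableSet_le measurable_id measurable_const) measurable_const
    (Measurable.ite (measurableSet_lt measurable_id measurable_const) measurable_const
      measurable_const)

theorem norm_g3_le (τ : ℝ) : ‖g3 τ‖ ≤ 1 := by
  unfold g3; split_ifs <;> norm_num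

theorem g3_of_le {τ : ℝ} (hτ : τ ≤ 1 / 4) : g3 τ = 1 := if_pos hτ

theorem g3_of_mem_Ioo {τ : ℝ} (hτ : τ ∈ Ioo (1 / 4) (3 / 4)) : g3 τ = 0 := by
  rw [g3, if_neg hτ.1.not_ge, if_pos hτ.2]

theorem g3_sq (τ : ℝ) : g3 τ ^ 2 = 1 - (Ioo (1 / 4 : ℝ) (3 / 4)).indicator 1 τ := by
  by_cases hτ : τ ∈ Ioo (1 / 4 : ℝ) (3 / 4)
  · rw [g3_of_mem_Ioo hτ, indicator_of_mem hτ]; simp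
  · unfold g3
    split_ifs <;> simp_all

theorem integral_g3_sq : ∫ τ in (0 : ℝ)..1, g3 τ ^ 2 = 1 / 2 := by
  have hS : MeasurableSet (Ioo (1 / 4 : ℝ) (3 / 4)) := measurableSet_Ioo
  have hS01 : Ioo (1 / 4 : ℝ) (3 / 4) ⊆ Ioc 0 1 :=
    Ioo_subset_Ioc_self.trans (Ioc_subset_Ioc (by norm_num) (by norm_num))
  simp_rw [g3_sq]
  rw [intervalIntegral.integral_of_le zero_le_one, integral_sub (integrable_const 1)
    ((integrable_const 1).indicator hS), integral_indicator_one hS,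
    measureReal_restrict_apply hS, inter_eq_left.2 hS01, Real.volume_real_Ioo_of_le (by norm_num)]
  norm_num

theorem one_eighth_le_integral_g3_sub_sq {h : ℝ → ℝ} (hmeas : Measurable h)
    (hint : IntervalIntegrable (fun τ => h τ ^ 2) volume 0 (1 / 2))
    (heven : ∀ᵐ τ, τ ∈ Ioo (0 : ℝ) (1 / 2) → h τ = h (1 / 2 - τ)) :
    1 / 8 ≤ ∫ τ in (0 : ℝ)..(1 / 2), (g3 τ - h τ) ^ 2 := by
  have hF := hint.sub_sq_of_bounded measurable_g3.aestronglyMeasurable norm_g3_le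
    hmeas.aestronglyMeasurable
  have hquarter : uIcc (0 : ℝ) (1 / 4) ⊆ uIcc 0 (1 / 2) :=
    uIcc_subset_uIcc_left (by norm_num [mem_uIcc])
  have hupper : uIcc (1 / 4 : ℝ) (1 / 2) ⊆ uIcc 0 (1 / 2) :=
    uIcc_subset_uIcc (by norm_num [mem_uIcc]) (by norm_num [mem_uIcc])
  have hsymm : ∫ τ in (1 / 4 : ℝ)..(1 / 2), h τ ^ 2 = ∫ τ in (0 : ℝ)..(1 / 4), h τ ^ 2 := by
    have := intervalIntegral.integral_upper_half_eq_of_ae_symm (f := fun τ => h τ ^ 2)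
      (c := 1 / 2) (by norm_num) (by filter_upwards [heven] with τ hτ hmem; rw [hτ hmem])
    norm_num at this ⊢
    exact this
  have hlower :
      ∫ τ in (0 : ℝ)..(1 / 4), (g3 τ - h τ) ^ 2 = ∫ τ in (0 : ℝ)..(1 / 4), (1 - h τ) ^ 2 :=
    intervalIntegral.integral_congr fun τ hτ => by
      rw [uIcc_of_le (by norm_num)] at hτ
      simp only [g3_of_le hτ.2]
  have hmid :
      ∫ τ in (1 / 4 : ℝ)..(1 / 2), (g3 τ - h τ) ^ 2 = ∫ τ in (1 / 4 : ℝ)..(1 / 2), h τ ^ 2 :=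
    intervalIntegral.integral_congr_ae (.of_forall fun τ hτ => by
      rw [uIoc_of_le (by norm_num)] at hτ
      rw [g3_of_mem_Ioo ⟨hτ.1, by linarith [hτ.2]⟩]
      ring)
  have h1 : IntervalIntegrable (fun τ => (1 - h τ) ^ 2) volume 0 (1 / 4) :=
    (hint.mono_set hquarter).sub_sq_of_bounded aestronglyMeasurable_const
      (fun _ => norm_one.le) hmeas.aestronglyMeasurable
  calc (1 / 8 : ℝ) = ∫ τ in (0 : ℝ)..(1 / 4), (1 / 2 : ℝ) := by norm_num
    _ ≤ ∫ τ in (0 : ℝ)..(1 / 4), ((1 - h τ) ^ 2 + h τ ^ 2) :=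
        intervalIntegral.integral_mono_on (by norm_num) intervalIntegrable_const
          (h1.add (hint.mono_set hquarter)) fun τ _ => half_le_one_sub_sq_add_sq (h τ)
    _ = ∫ τ in (0 : ℝ)..(1 / 2), (g3 τ - h τ) ^ 2 := by
        rw [intervalIntegral.integral_add h1 (hint.mono_set hquarter), ← hsymm, ← hlower, ← hmid,
          intervalIntegral.integral_add_adjacent_intervals (hF.mono_set hquarter)
            (hF.mono_set hupper)]

theorem stmt19_general (h : ℝ → ℝ) (hmeas : Measurable h)
    (hint : IntervalIntegrable (fun τ => (h τ) ^ 2) volume 0 1)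
    (heven : ∀ᵐ τ ∂volume, τ ∈ Set.Ioo (0:ℝ) (1/2) → h τ = h (1/2 - τ)) :
    (∫ τ in (0:ℝ)..1, (g3 τ - h τ) ^ 2)
        ≥ 1/4 * ∫ τ in (0:ℝ)..1, (g3 τ) ^ 2 ∧
      0 < 1/4 * ∫ τ in (0:ℝ)..1, (g3 τ) ^ 2 := by
  rw [integral_g3_sq]
  refine ⟨?_, by norm_num⟩
  have hhalf : uIcc (0 : ℝ) (1 / 2) ⊆ uIcc 0 1 := uIcc_subset_uIcc_left (by norm_num [mem_uIcc])
  calc 1 / 4 * (1 / 2 : ℝ) = 1 / 8 := by norm_num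
    _ ≤ ∫ τ in (0 : ℝ)..(1 / 2), (g3 τ - h τ) ^ 2 :=
        one_eighth_le_integral_g3_sub_sq hmeas (hint.mono_set hhalf) heven
    _ ≤ ∫ τ in (0 : ℝ)..1, (g3 τ - h τ) ^ 2 :=
        intervalIntegral.integral_mono_interval le_rfl (by norm_num) (by norm_num)
          (.of_forall fun τ => sq_nonneg _)
          (hint.sub_sq_of_bounded measurable_g3.aestronglyMeasurable norm_g3_le
            hmeas.aestronglyMeasurable)

theorem stmt19 (h : ℝ → ℝ) (hmeas : Measurable h)
    (hint : IntervalIntegrable (fun τ => (h τ) ^ 2) volume 0 1)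
    (hanti : ∀ᵐ τ ∂volume, τ ∈ Set.Ioo (0:ℝ) (1/2) → h (τ + 1/2) = -h τ)
    (heven : ∀ᵐ τ ∂volume, τ ∈ Set.Ioo (0:ℝ) (1/2) → h τ = h (1/2 - τ)) :
    (∫ τ in (0:ℝ)..1, (g3 τ - h τ) ^ 2)
        ≥ 1/4 * ∫ τ in (0:ℝ)..1, (g3 τ) ^ 2 ∧
      0 < 1/4 * ∫ τ in (0:ℝ)..1, (g3 τ) ^ 2 :=
  stmt19_general h hmeas hint heven
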